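/- Let (A, μ, α) be a W*-dynamical system where the dynamics is the modular group itself (G = ℝ, α_t = σ^μ_t). If the system is ergodic (fixed point algebra of σ^μ is ℂ1), then it is weakly mixing: the closed span H₀ of eigenvectors of the implementing unitary group on the GNS space is one-dimensional, H₀ = ℂΩ_μ. -/

import Mathlib

noncomputable section

local notation "⟪" x ", " y "⟫" => @inner ℂ _ _ x y

/-- Conjugation of a bounded operator by a unitary (surjective linear isometry). -/
def conjAct {H : Type*} [NormedAddCommGroup H] [InnerProductSpace ℂ H]
    (u : H ≃ₗᵢ[ℂ] H) (a : H →L[ℂ] H) : H →L[ℂ] H :=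
  u.toLinearIsometry.toContinuousLinearMap ∘L a ∘L
    u.symm.toLinearIsometry.toContinuousLinearMap

/-- The μ-KMS condition for a one-parameter group `σ` with respect to the vector
state a ↦ ⟨Ω, aΩ⟩ of `M`; this characterizes the modular automorphism group. -/
def IsKMS {H : Type*} [NormedAddCommGroup H] [InnerProductSpace ℂ H] [CompleteSpace H]
    (M : VonNeumannAlgebra H) (Ω : H)
    (σ : ℝ → (H →L[ℂ] H) → (H →L[ℂ] H)) : Prop :=
  ∀ a ∈ M, ∀ b ∈ M, ∃ F : ℂ → ℂ,
    (∃ C : ℝ, ∀ z : ℂ, 0 ≤ z.im → z.im ≤ 1 → ‖F z‖ ≤ C) ∧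
    ContinuousOn F {z : ℂ | 0 ≤ z.im ∧ z.im ≤ 1} ∧
    DifferentiableOn ℂ F {z : ℂ | 0 < z.im ∧ z.im < 1} ∧
    (∀ t : ℝ, F t = ⟪Ω, ((σ t a) ∘L b) Ω⟫) ∧
    (∀ t : ℝ, F (t + Complex.I) = ⟪Ω, (b ∘L (σ t a)) Ω⟫)

/-!
An eigenvector `y` of `D` has a continuous unitary character, so `D t y = exp (i s t) • y`.
Averaging `conj (exp (i s t)) • σ_t(x)` over `[0, T]` and taking a weak-operator cluster point as
`T → ∞` turns any `x ∈ M` into `m ∈ M` with `σ_u(m) = exp (i s u) • m` and `⟪y, mΩ⟫ = ⟪y, xΩ⟫`;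
by cyclicity some `x` makes this nonzero. Ergodicity makes `m⋆m = q • 1` and `m m⋆ = p • 1`, with
`p = q = ‖mΩ‖² ≠ 0`. The KMS function of `(m, m⋆)` equals `exp (i s t) p` on the lower and
`exp (i s t) q` on the upper edge of the strip `0 ≤ im z ≤ 1`; multiplied by `exp (-i s z)` it is
bounded and constant on each edge, and Phragmén–Lindelöf together with connectedness forces the
two constants `p` and `e^s q` to agree. Hence `s = 0`, so `y` is invariant; then every `m` above
is a scalar, which puts `y - ⟪Ω, y⟫ Ω` orthogonal to the dense set `MΩ`.
-/

open Complex ComplexConjugate MeasureTheory Filter Topology Set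

lemma exists_intervalIntegral_ne_zero {E : Type*} [NormedAddCommGroup E] [NormedSpace ℝ E]
    [CompleteSpace E] {f : ℝ → E} (hf : Continuous f) {a : ℝ} (ha : f a ≠ 0) :
    ∃ b : ℝ, ∫ u in a..b, f u ≠ 0 := by
  by_contra! h
  have hF := (hf.integral_hasStrictDerivAt a a).hasDerivAt
  rw [show (fun b => ∫ u in a..b, f u) = fun _ => 0 from funext h] at hF
  exact ha (hF.unique (hasDerivAt_const a 0))

section Character

variable {χ : ℝ → ℂ}

lemma Continuous.differentiable_of_map_add_eq_mul (hχ : Continuous χ) (h0 : χ 0 = 1)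
    (hmul : ∀ u v, χ (u + v) = χ u * χ v) : Differentiable ℝ χ := by
  obtain ⟨δ, hδ⟩ := exists_intervalIntegral_ne_zero hχ (a := 0) (by simp [h0])
  set Φ : ℝ → ℂ := fun t => ∫ u in (0 : ℝ)..t, χ u
  have hΦ : Differentiable ℝ Φ := fun t =>
    (hχ.integral_hasStrictDerivAt 0 t).hasDerivAt.differentiableAt
  -- `χ t` times the mean of `χ` over `[0, δ]` is its mean over `[t, t + δ]`
  have hχ_eq : χ = fun t => (Φ (t + δ) - Φ t) / ∫ u in (0 : ℝ)..δ, χ u := by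
    funext t
    rw [eq_div_iff hδ, intervalIntegral.integral_interval_sub_left (hχ.intervalIntegrable _ _)
      (hχ.intervalIntegrable _ _), ← intervalIntegral.integral_const_mul]
    simp_rw [← hmul, intervalIntegral.integral_comp_add_left (fun u => χ u), add_zero]
  rw [hχ_eq]
  exact ((hΦ.comp (differentiable_id.add_const δ)).sub hΦ).div_const _

lemma exists_eq_exp_mul_of_map_add_eq_mul (hχ : Continuous χ) (h0 : χ 0 = 1)
    (hmul : ∀ u v, χ (u + v) = χ u * χ v) : ∃ k : ℂ, ∀ t : ℝ, χ t = exp (k * t) := by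
  have hdiff := hχ.differentiable_of_map_add_eq_mul h0 hmul
  set k := deriv χ 0
  have hχ' : ∀ t, HasDerivAt χ (χ t * k) t := by
    intro t
    have h := (((hdiff (t - t)).hasDerivAt.comp_sub_const t t).const_mul (χ t))
    rwa [sub_self, show (fun s => χ t * χ (s - t)) = χ from
      funext fun s => by rw [← hmul, add_sub_cancel]] at h
  have hconst : ∀ t : ℝ, HasDerivAt (fun t : ℝ => χ t * exp (-(k * t))) 0 t := by
    intro t
    have he : HasDerivAt (fun t : ℝ => exp (-(k * t))) (exp (-(k * t)) * -k) t := by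
      simpa using ((hasDerivAt_id (t : ℂ)).const_mul k).neg.cexp.comp_ofReal
    have h := (hχ' t).mul he
    rwa [show χ t * k * exp (-(k * t)) + χ t * (exp (-(k * t)) * -k) = 0 by ring] at h
  refine ⟨k, fun t => ?_⟩
  have h := is_const_of_deriv_eq_zero (fun t => (hconst t).differentiableAt)
    (fun t => (hconst t).deriv) t 0
  simp only [ofReal_zero, mul_zero, neg_zero, exp_zero, mul_one, h0] at h
  rw [← mul_one (χ t), ← exp_zero, ← neg_add_cancel (k * t), exp_add, ← mul_assoc, h, one_mul]

lemma exists_eq_exp_I_mul_of_map_add_eq_mul (hχ : Continuous χ) (h0 : χ 0 = 1)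
    (hmul : ∀ u v, χ (u + v) = χ u * χ v) (hnorm : ∀ t, ‖χ t‖ = 1) :
    ∃ s : ℝ, ∀ t : ℝ, χ t = exp (I * s * t) := by
  obtain ⟨k, hk⟩ := exists_eq_exp_mul_of_map_add_eq_mul hχ h0 hmul
  have hre : k.re = 0 := by
    simpa [hk, norm_exp] using hnorm 1
  refine ⟨k.im, fun t => ?_⟩
  rw [hk]
  congr 1
  apply Complex.ext <;> simp [hre]

end Character

lemma tendsto_inv_smul_intervalIntegral_comp_add_sub {E : Type*} [NormedAddCommGroup E]
    [NormedSpace ℝ E] [CompleteSpace E] {f : ℝ → E} (hf : Continuous f) {C : ℝ}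
    (hC : ∀ t, ‖f t‖ ≤ C) (u : ℝ) :
    Tendsto (fun T : ℝ => T⁻¹ • ((∫ t in (0 : ℝ)..T, f (t + u)) - ∫ t in (0 : ℝ)..T, f t))
      atTop (𝓝 0) := by
  have hint : ∀ a b : ℝ, IntervalIntegrable f volume a b := fun a b => hf.intervalIntegrable a b
  -- translating the window by `u` only changes two pieces of length `|u|`
  have hdiff : ∀ T : ℝ, ‖(∫ t in (0 : ℝ)..T, f (t + u)) - ∫ t in (0 : ℝ)..T, f t‖
      ≤ 2 * (C * |u|) := by
    intro T
    rw [intervalIntegral.integral_comp_add_right, zero_add,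
      intervalIntegral.integral_interval_sub_interval_comm (hint _ _) (hint _ _) (hint _ _)]
    refine (norm_sub_le _ _).trans ?_
    rw [two_mul]
    gcongr
    · refine (intervalIntegral.norm_integral_le_of_norm_le_const fun t _ => hC t).trans_eq ?_
      rw [zero_sub, abs_neg]
    · refine (intervalIntegral.norm_integral_le_of_norm_le_const fun t _ => hC t).trans_eq ?_
      rw [sub_add_cancel_left, abs_neg]
  refine squeeze_zero_norm' (a := fun T => T⁻¹ * (2 * (C * |u|))) ?_
    (by simpa using tendsto_inv_atTop_zero.mul_const (2 * (C * |u|)))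
  filter_upwards [eventually_gt_atTop 0] with T hT
  rw [norm_smul, Real.norm_of_nonneg (inv_nonneg.2 hT.le)]
  exact mul_le_mul_of_nonneg_left (hdiff T) (inv_nonneg.2 hT.le)

lemma closure_preimage_im_Ioo_zero_one : closure (im ⁻¹' Ioo (0 : ℝ) 1) = im ⁻¹' Icc 0 1 := by
  rw [closure_preimage_im, closure_Ioo zero_ne_one]

lemma eq_of_diffContOnCl_strip {K : ℂ → ℂ} (hK : DiffContOnCl ℂ K (im ⁻¹' Ioo 0 1))
    {C : ℝ} (hC : ∀ z ∈ im ⁻¹' Ioo (0 : ℝ) 1, ‖K z‖ ≤ C) {p q : ℂ}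
    (hp : ∀ z : ℂ, z.im = 0 → K z = p) (hq : ∀ z : ℂ, z.im = 1 → K z = q) : p = q := by
  have hzero : EqOn (fun z => (K z - p) * (K z - q)) 0 (im ⁻¹' Icc 0 1) := by
    refine PhragmenLindelof.eq_zero_on_horizontal_strip ((hK.sub_const p).smul (hK.sub_const q))
      ⟨0, by positivity, 0, ?_⟩ (fun z hz => by simp [hp z hz]) (fun z hz => by simp [hq z hz])
    simp only [zero_mul, Real.exp_zero]
    refine Asymptotics.IsBigO.of_bound ((C + ‖p‖) * (C + ‖q‖)) ?_
    refine eventually_inf_principal.2 (Eventually.of_forall fun z hz => ?_)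
    have hbound : ∀ c : ℂ, ‖K z - c‖ ≤ C + ‖c‖ := fun c =>
      (norm_sub_le _ _).trans (add_le_add_left (hC z hz) _)
    rw [norm_one, mul_one, norm_mul]
    exact mul_le_mul (hbound p) (hbound q) (norm_nonneg _) ((norm_nonneg _).trans (hbound p))
  have hmaps : MapsTo K (im ⁻¹' Icc 0 1) {p, q} := fun z hz => by
    rcases mul_eq_zero.1 (hzero hz) with h | h
    exacts [Or.inl (sub_eq_zero.1 h), Or.inr (sub_eq_zero.1 h)]
  have hconn : IsPreconnected (im ⁻¹' Icc (0 : ℝ) 1) :=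
    ((convex_Icc 0 1).linear_preimage imLm).isPreconnected
  rw [← hp 0 (by simp), ← hq I (by simp)]
  exact hconn.constant_of_mapsTo (toFinite _).isDiscrete
    (closure_preimage_im_Ioo_zero_one ▸ hK.continuousOn) hmaps (by simp) (by simp)

lemma eq_exp_mul_of_strip_boundary {F : ℂ → ℂ} {C : ℝ}
    (hb : ∀ z : ℂ, 0 ≤ z.im → z.im ≤ 1 → ‖F z‖ ≤ C)
    (hc : ContinuousOn F {z : ℂ | 0 ≤ z.im ∧ z.im ≤ 1})
    (hd : DifferentiableOn ℂ F {z : ℂ | 0 < z.im ∧ z.im < 1}) {s : ℝ} {p q : ℂ}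
    (hbot : ∀ t : ℝ, F t = exp (I * s * t) * p)
    (htop : ∀ t : ℝ, F (t + I) = exp (I * s * t) * q) : p = exp s * q := by
  have hexp : Differentiable ℂ fun z => exp (-(I * s * z)) := by fun_prop
  refine eq_of_diffContOnCl_strip (K := fun z => exp (-(I * s * z)) * F z) (C := Real.exp |s| * C)
    ⟨hexp.differentiableOn.mul hd, ?_⟩ (fun z hz => ?_) (fun z hz => ?_) (fun z hz => ?_)
  · rw [closure_preimage_im_Ioo_zero_one]
    exact hexp.continuous.continuousOn.mul hc
  · have hre : (-(I * s * z)).re ≤ |s| := by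
      simpa using (mul_le_mul_of_nonneg_right (le_abs_self s) hz.1.le).trans
        (mul_le_of_le_one_right (abs_nonneg s) hz.2.le)
    rw [norm_mul, norm_exp]
    exact mul_le_mul (Real.exp_le_exp.2 hre) (hb z hz.1.le hz.2.le) (norm_nonneg _)
      (Real.exp_pos _).le
  · rw [show z = (z.re : ℂ) from Complex.ext rfl (by simp [hz]), hbot, ← mul_assoc, ← exp_add,
      neg_add_cancel, exp_zero, one_mul]
  · rw [show z = (z.re : ℂ) + I from Complex.ext (by simp) (by simp [hz]), htop, ← mul_assoc,
      ← exp_add]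
    congr 2
    ring_nf
    simp [I_sq]


lemma LinearIsometryEquiv.continuous_apply_apply {X E F : Type*} [TopologicalSpace X]
    [SeminormedAddCommGroup E] [SeminormedAddCommGroup F] [NormedSpace ℂ E] [NormedSpace ℂ F]
    {D : X → E ≃ₗᵢ[ℂ] F} (hD : ∀ v, Continuous fun t => D t v) {v : X → E} (hv : Continuous v) :
    Continuous fun t => D t (v t) := by
  refine continuous_iff_continuousAt.2 fun t₀ => tendsto_iff_dist_tendsto_zero.2 ?_
  have hle : ∀ t, dist (D t (v t)) (D t₀ (v t₀))
      ≤ dist (v t) (v t₀) + dist (D t (v t₀)) (D t₀ (v t₀)) := fun t => by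
    simpa only [(D t).dist_map] using dist_triangle (D t (v t)) (D t (v t₀)) (D t₀ (v t₀))
  refine squeeze_zero (fun _ => dist_nonneg) hle ?_
  simpa using ((hv.tendsto t₀).dist (tendsto_const_nhds (x := v t₀))).add
    (((hD (v t₀)).tendsto t₀).dist (tendsto_const_nhds (x := D t₀ (v t₀))))

lemma exists_apply_eq_intervalIntegral {E F : Type*} [NormedAddCommGroup E] [NormedSpace ℂ E]
    [NormedAddCommGroup F] [NormedSpace ℂ F] {A : ℝ → E →L[ℂ] F}
    (hA : ∀ η, Continuous fun t => A t η) {C : ℝ} (hC : ∀ t η, ‖A t η‖ ≤ C * ‖η‖) (a b : ℝ) :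
    ∃ B : E →L[ℂ] F, ∀ η, B η = ∫ t in a..b, A t η := by
  have hint : ∀ η, IntervalIntegrable (fun t => A t η) volume a b :=
    fun η => (hA η).intervalIntegrable a b
  let B : E →ₗ[ℂ] F :=
    { toFun := fun η => ∫ t in a..b, A t η
      map_add' := fun η η' => by
        simp only [map_add]
        exact intervalIntegral.integral_add (hint η) (hint η')
      map_smul' := fun c η => by
        simp only [map_smul, RingHom.id_apply]
        exact intervalIntegral.integral_smul c _ }
  refine ⟨B.mkContinuous (C * |b - a|) fun η => ?_, fun η => rfl⟩
  calc ‖∫ t in a..b, A t η‖ ≤ C * ‖η‖ * |b - a| :=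
        intervalIntegral.norm_integral_le_of_norm_le_const fun t _ => hC t η
    _ = C * |b - a| * ‖η‖ := by ring

section Operators

variable {H : Type*} [NormedAddCommGroup H] [InnerProductSpace ℂ H] [CompleteSpace H]

lemma exists_tendsto_inner_of_norm_le {α : Type*} (U : Ultrafilter α) {v : α → H} {C : ℝ}
    (hv : ∀ i, ‖v i‖ ≤ C) : ∃ w : H, ‖w‖ ≤ C ∧ ∀ ξ, Tendsto (fun i => ⟪ξ, v i⟫) U (𝓝 ⟪ξ, w⟫) := by
  -- Banach–Alaoglu, applied to the functionals `⟪v i, ·⟫`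
  obtain ⟨_, ⟨φ, hφ, rfl⟩, hlim⟩ :=
    (ContinuousLinearMap.isCompact_image_coe_closedBall (0 : H →L[ℂ] ℂ) C).ultrafilter_le_nhds
      (U.map fun i => ⇑(innerSL ℂ (v i)))
      (le_principal_iff.2 <| mem_map.2 <| univ_mem' fun i => mem_image_of_mem DFunLike.coe
        (show innerSL ℂ (v i) ∈ Metric.closedBall 0 C by simpa using hv i))
  refine ⟨(InnerProductSpace.toDual ℂ H).symm φ, by simpa using hφ, fun ξ => ?_⟩
  have h := (continuous_conj.tendsto _).comp (tendsto_pi_nhds.1 hlim ξ)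
  simp only [Function.comp_def, innerSL_apply_apply, inner_conj_symm] at h
  rwa [← InnerProductSpace.toDual_symm_apply, inner_conj_symm] at h

lemma exists_tendsto_inner_apply_of_norm_apply_le {α : Type*} (U : Ultrafilter α)
    {a : α → H →L[ℂ] H} {C : ℝ} (ha : ∀ i η, ‖a i η‖ ≤ C * ‖η‖) :
    ∃ m : H →L[ℂ] H, ∀ ξ η, Tendsto (fun i => ⟪ξ, a i η⟫) U (𝓝 ⟪ξ, m η⟫) := by
  choose w hw hlim using fun η => exists_tendsto_inner_of_norm_le U (ha · η)
  let m : H →ₗ[ℂ] H :=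
    { toFun := w
      map_add' := fun η η' => ext_inner_left ℂ fun ξ => tendsto_nhds_unique (hlim (η + η') ξ)
        (by simpa only [map_add, inner_add_right] using (hlim η ξ).add (hlim η' ξ))
      map_smul' := fun c η => ext_inner_left ℂ fun ξ => tendsto_nhds_unique (hlim (c • η) ξ)
        (by simpa only [map_smul, inner_smul_right, RingHom.id_apply]
          using (hlim η ξ).const_mul c) }
  exact ⟨m.mkContinuous C hw, fun ξ η => hlim η ξ⟩

namespace VonNeumannAlgebra

variable (M : VonNeumannAlgebra H)

lemma mem_iff_forall_commute {m : H →L[ℂ] H} :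
    m ∈ M ↔ ∀ z ∈ Set.centralizer (M : Set (H →L[ℂ] H)), ∀ η, z (m η) = m (z η) := by
  rw [← SetLike.mem_coe]
  conv_lhs => rw [← M.centralizer_centralizer]
  simp only [Set.mem_centralizer_iff, ContinuousLinearMap.ext_iff, mul_apply_eq_comp]

lemma mem_of_apply_eq_intervalIntegral {A : ℝ → H →L[ℂ] H} (hAM : ∀ t, A t ∈ M)
    (hA : ∀ η, Continuous fun t => A t η) {a b : ℝ} {B : H →L[ℂ] H}
    (hB : ∀ η, B η = ∫ t in a..b, A t η) : B ∈ M := by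
  refine (M.mem_iff_forall_commute).2 fun z hz η => ?_
  rw [hB, hB, ← z.intervalIntegral_comp_comm ((hA η).intervalIntegrable a b)]
  simp_rw [(M.mem_iff_forall_commute).1 (hAM _) z hz]

lemma mem_of_tendsto_inner_apply {α : Type*} {l : Filter α} [l.NeBot] {a : α → H →L[ℂ] H}
    (ha : ∀ i, a i ∈ M) {m : H →L[ℂ] H} (hm : ∀ ξ η, Tendsto (fun i => ⟪ξ, a i η⟫) l (𝓝 ⟪ξ, m η⟫)) :
    m ∈ M := by
  refine (M.mem_iff_forall_commute).2 fun z hz η => ext_inner_left ℂ fun ξ => ?_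
  rw [← ContinuousLinearMap.adjoint_inner_left]
  refine tendsto_nhds_unique (hm _ η) ?_
  simp_rw [ContinuousLinearMap.adjoint_inner_left, (M.mem_iff_forall_commute).1 (ha _) z hz]
  exact hm ξ (z η)

lemma exists_mem_tendsto_inner_average {A : ℝ → H →L[ℂ] H}
    (hAM : ∀ t, A t ∈ M) (hA : ∀ η, Continuous fun t => A t η) {C : ℝ}
    (hC : ∀ t η, ‖A t η‖ ≤ C * ‖η‖) :
    ∃ U : Ultrafilter ℝ, (U : Filter ℝ) ≤ atTop ∧ ∃ m ∈ M, ∀ ξ η,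
      Tendsto (fun T : ℝ => T⁻¹ • ∫ t in (0 : ℝ)..T, ⟪ξ, A t η⟫) U (𝓝 ⟪ξ, m η⟫) := by
  choose B hB using fun T => exists_apply_eq_intervalIntegral hA hC 0 T
  let a : ℝ → H →L[ℂ] H := fun T => ((T⁻¹ : ℝ) : ℂ) • B T
  have ha : ∀ T ξ η, ⟪ξ, a T η⟫ = T⁻¹ • ∫ t in (0 : ℝ)..T, ⟪ξ, A t η⟫ := fun T ξ η => by
    rw [smul_apply, inner_smul_right, hB, ← real_smul]
    congr 1
    exact ((innerSL ℂ ξ).intervalIntegral_comp_comm ((hA η).intervalIntegrable _ _)).symm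
  have hbound : ∀ T η, ‖a T η‖ ≤ C * ‖η‖ := by
    intro T η
    rcases eq_or_ne T 0 with rfl | hT
    · simpa [a, hB] using (norm_nonneg _).trans (hC 0 η)
    · calc ‖a T η‖ = |T|⁻¹ * ‖∫ t in (0 : ℝ)..T, A t η‖ := by simp [a, hB, norm_smul]
        _ ≤ |T|⁻¹ * (C * ‖η‖ * |T - 0|) := by
          gcongr
          exact intervalIntegral.norm_integral_le_of_norm_le_const fun t _ => hC t η
        _ = C * ‖η‖ := by
          rw [sub_zero]
          field_simp
  obtain ⟨m, hm⟩ := exists_tendsto_inner_apply_of_norm_apply_le (Ultrafilter.of atTop) hbound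
  refine ⟨Ultrafilter.of atTop, Ultrafilter.of_le _, m,
    M.mem_of_tendsto_inner_apply (fun T => ?_) hm, fun ξ η => ?_⟩
  · exact M.smul_mem (M.mem_of_apply_eq_intervalIntegral hAM hA (hB T)) _
  · simpa only [ha] using hm ξ η

end VonNeumannAlgebra

end Operators

section UnitaryGroup

variable {H : Type*} [NormedAddCommGroup H] [InnerProductSpace ℂ H]

@[simp] lemma conjAct_apply (u : H ≃ₗᵢ[ℂ] H) (a : H →L[ℂ] H) (η : H) :
    conjAct u a η = u (a (u.symm η)) := rfl

lemma inner_conjAct_apply (u : H ≃ₗᵢ[ℂ] H) (a : H →L[ℂ] H) (ξ η : H) :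
    ⟪ξ, conjAct u a η⟫ = ⟪u.symm ξ, a (u.symm η)⟫ := by
  rw [conjAct_apply, u.symm.inner_map_eq_flip, LinearIsometryEquiv.symm_symm]

lemma conjAct_smul (u : H ≃ₗᵢ[ℂ] H) (c : ℂ) (a : H →L[ℂ] H) :
    conjAct u (c • a) = c • conjAct u a := by
  ext; simp

lemma conjAct_mul (u : H ≃ₗᵢ[ℂ] H) (a b : H →L[ℂ] H) :
    conjAct u (a * b) = conjAct u a * conjAct u b := by
  ext; simp [mul_apply_eq_comp]

lemma conjAct_star [CompleteSpace H] (u : H ≃ₗᵢ[ℂ] H) (a : H →L[ℂ] H) :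
    conjAct u (star a) = star (conjAct u a) := by
  rw [ContinuousLinearMap.star_eq_adjoint, ContinuousLinearMap.star_eq_adjoint,
    ContinuousLinearMap.eq_adjoint_iff]
  intro ξ η
  rw [conjAct_apply, u.inner_map_eq_flip, ContinuousLinearMap.adjoint_inner_left,
    inner_conjAct_apply]

lemma conjAct_eq_smul_of_tendsto_average {A : ℝ → H →L[ℂ] H}
    (hA : ∀ η, Continuous fun t => A t η) {C : ℝ} (hC : ∀ t η, ‖A t η‖ ≤ C * ‖η‖)
    {U : Ultrafilter ℝ} (hU : (U : Filter ℝ) ≤ atTop) {m : H →L[ℂ] H}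
    (hm : ∀ ξ η, Tendsto (fun T : ℝ => T⁻¹ • ∫ t in (0 : ℝ)..T, ⟪ξ, A t η⟫) U (𝓝 ⟪ξ, m η⟫))
    (V : H ≃ₗᵢ[ℂ] H) (c : ℂ) (u : ℝ) (hshift : ∀ t, conjAct V (A t) = c • A (t + u)) :
    conjAct V m = c • m := by
  ext η
  refine ext_inner_left ℂ fun ξ => ?_
  rw [inner_conjAct_apply, smul_apply, inner_smul_right]
  refine tendsto_nhds_unique (hm _ _) ?_
  simp_rw [← inner_conjAct_apply, hshift, smul_apply, inner_smul_right,
    intervalIntegral.integral_const_mul]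
  have hcesaro := (tendsto_inv_smul_intervalIntegral_comp_add_sub (f := fun t => ⟪ξ, A t η⟫)
    (continuous_const.inner (hA η)) (fun t => (norm_inner_le_norm (𝕜 := ℂ) ξ (A t η)).trans
      (mul_le_mul_of_nonneg_left (hC t η) (norm_nonneg ξ))) u).mono_left hU
  have h := (hcesaro.add (hm ξ η)).const_mul c
  rw [zero_add] at h
  refine h.congr fun T => ?_
  rw [← smul_add, sub_add_cancel, mul_smul_comm]

variable {D : ℝ → H ≃ₗᵢ[ℂ] H}

lemma symm_eq_neg_of_map_add (hD0 : D 0 = LinearIsometryEquiv.refl ℂ H)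
    (hDadd : ∀ s t : ℝ, D (s + t) = (D s).trans (D t)) (t : ℝ) : (D t).symm = D (-t) := by
  ext v
  rw [LinearIsometryEquiv.symm_apply_eq, ← LinearIsometryEquiv.trans_apply, ← hDadd,
    neg_add_cancel, hD0]
  rfl

lemma conjAct_conjAct_of_map_add (hDadd : ∀ s t : ℝ, D (s + t) = (D s).trans (D t))
    (s t : ℝ) (a : H →L[ℂ] H) : conjAct (D t) (conjAct (D s) a) = conjAct (D (s + t)) a := by
  ext; simp [hDadd]

lemma exists_eq_exp_of_apply_eq_smul (hD0 : D 0 = LinearIsometryEquiv.refl ℂ H)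
    (hDadd : ∀ s t : ℝ, D (s + t) = (D s).trans (D t)) (hDcont : ∀ x : H, Continuous fun t => D t x)
    {y : H} (hy : y ≠ 0) {χ : ℝ → ℂ} (hχ : ∀ t, D t y = χ t • y) :
    ∃ s : ℝ, ∀ t : ℝ, χ t = exp (I * s * t) := by
  have hinj := smul_left_injective ℂ hy
  refine exists_eq_exp_I_mul_of_map_add_eq_mul ?_ (hinj ?_) (fun u v => hinj ?_) (fun t => ?_)
  · have hχ_eq : χ = fun t => ⟪y, D t y⟫ / ⟪y, y⟫ := funext fun t => by
      rw [hχ, inner_smul_right, mul_div_cancel_right₀ _ (inner_self_ne_zero.2 hy)]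
    rw [hχ_eq]
    fun_prop
  · simp [← hχ, hD0]
  · change χ (u + v) • y = (χ u * χ v) • y
    rw [← hχ, hDadd, LinearIsometryEquiv.trans_apply, hχ, map_smul, hχ, smul_smul, mul_comm]
  · have h := (D t).norm_map y
    rw [hχ, norm_smul] at h
    exact mul_right_cancel₀ (norm_ne_zero_iff.2 hy) (h.trans (one_mul _).symm)

lemma conjAct_conj_smul_conjAct (hDadd : ∀ s t : ℝ, D (s + t) = (D s).trans (D t))
    {χ : ℝ → ℂ} (hmul : ∀ u v, χ (u + v) = χ u * χ v) (hnorm : ∀ t, ‖χ t‖ = 1)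
    (x : H →L[ℂ] H) (u t : ℝ) :
    conjAct (D u) (conj (χ t) • conjAct (D t) x)
      = χ u • (conj (χ (t + u)) • conjAct (D (t + u)) x) := by
  simp only [conjAct_smul, conjAct_conjAct_of_map_add hDadd, smul_smul, hmul, map_mul]
  rw [mul_left_comm, mul_conj', hnorm]
  simp

end UnitaryGroup

section ModularGroup

variable {H : Type*} [NormedAddCommGroup H] [InnerProductSpace ℂ H] [CompleteSpace H]
  {D : ℝ → H ≃ₗᵢ[ℂ] H}

lemma exists_mem_conjAct_eq_smul (M : VonNeumannAlgebra H)
    (hD0 : D 0 = LinearIsometryEquiv.refl ℂ H)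
    (hDadd : ∀ s t : ℝ, D (s + t) = (D s).trans (D t))
    (hDcont : ∀ x : H, Continuous fun t => D t x)
    (hDM : ∀ t, conjAct (D t) '' (M : Set (H →L[ℂ] H)) = (M : Set (H →L[ℂ] H)))
    {χ : ℝ → ℂ} (hχ : Continuous χ) (hmul : ∀ u v, χ (u + v) = χ u * χ v)
    (hnorm : ∀ t, ‖χ t‖ = 1) {x : H →L[ℂ] H} (hx : x ∈ M) :
    ∃ m ∈ M, (∀ u, conjAct (D u) m = χ u • m) ∧
      ∀ v w : H, (∀ t, D t v = v) → (∀ t, D t w = χ t • w) → ⟪w, m v⟫ = ⟪w, x v⟫ := by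
  set A : ℝ → H →L[ℂ] H := fun t => conj (χ t) • conjAct (D t) x
  have hAM : ∀ t, A t ∈ M := fun t =>
    M.smul_mem (show conjAct (D t) x ∈ (M : Set (H →L[ℂ] H)) from hDM t ▸ mem_image_of_mem _ hx) _
  have hA : ∀ η, Continuous fun t => A t η := fun η => by
    simp only [A, smul_apply, conjAct_apply, symm_eq_neg_of_map_add hD0 hDadd]
    exact (continuous_conj.comp hχ).smul (LinearIsometryEquiv.continuous_apply_apply hDcont
      (x.continuous.comp ((hDcont η).comp continuous_neg)))
  have hAbound : ∀ t η, ‖A t η‖ ≤ ‖x‖ * ‖η‖ := fun t η => by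
    simpa [A, norm_smul, hnorm] using x.le_opNorm ((D t).symm η)
  obtain ⟨U, hU, m, hmM, hm⟩ := M.exists_mem_tendsto_inner_average hAM hA hAbound
  refine ⟨m, hmM, fun u => conjAct_eq_smul_of_tendsto_average hA hAbound hU hm _ _ u
    (conjAct_conj_smul_conjAct hDadd hmul hnorm x u), fun v w hv hw => ?_⟩
  refine tendsto_nhds_unique (hm w v) (tendsto_const_nhds.congr' ?_)
  have hconst : ∀ t, ⟪w, A t v⟫ = ⟪w, x v⟫ := fun t => by
    simp only [A, smul_apply, conjAct_apply, inner_smul_right, (D t).symm_apply_eq.2 (hv t).symm]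
    rw [← (D t).inner_map_map w (x v), hw, inner_smul_left]
  filter_upwards [hU (eventually_ne_atTop 0)] with T hT
  simp_rw [hconst, intervalIntegral.integral_const, sub_zero]
  exact (inv_smul_smul₀ hT _).symm

lemma eq_zero_of_conjAct_eq_exp_smul (M : VonNeumannAlgebra H) {Ω : H} (hΩ : ‖Ω‖ = 1)
    (hKMS : IsKMS M Ω fun t => conjAct (D t))
    (herg : ∀ a ∈ M, (∀ t : ℝ, conjAct (D t) a = a) → ∃ c : ℂ, a = c • (1 : H →L[ℂ] H))
    {m : H →L[ℂ] H} (hm : m ∈ M) (hmΩ : m Ω ≠ 0) {s : ℝ}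
    (hcov : ∀ u : ℝ, conjAct (D u) m = exp (I * s * u) • m) : s = 0 := by
  have hunit : ∀ u : ℝ, conj (exp (I * s * u)) * exp (I * s * u) = 1 := fun u => by
    rw [← exp_conj, ← exp_add]
    simp
  have hstar : ∀ u : ℝ, conjAct (D u) (star m) = conj (exp (I * s * u)) • star m := fun u => by
    rw [conjAct_star, hcov, star_smul]
    rfl
  obtain ⟨q, hq⟩ := herg (star m * m) (mul_mem (star_mem hm) hm) fun u => by
    rw [conjAct_mul, hstar, hcov, smul_mul_smul_comm, hunit, one_smul]
  obtain ⟨p, hp⟩ := herg (m * star m) (mul_mem hm (star_mem hm)) fun u => by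
    rw [conjAct_mul, hstar, hcov, smul_mul_smul_comm, mul_comm, hunit, one_smul]
  have hvalue : ∀ c : ℂ, ⟪Ω, (c • (1 : H →L[ℂ] H)) Ω⟫ = c := fun c => by
    simp [hΩ]
  have hq0 : q ≠ 0 := by
    rw [← hvalue q, ← hq, mul_apply_eq_comp, ContinuousLinearMap.star_eq_adjoint,
      ContinuousLinearMap.adjoint_inner_right]
    exact inner_self_ne_zero.2 hmΩ
  have hpq : p = q := by
    have h : m * (star m * m) = (m * star m) * m := (mul_assoc _ _ _).symm
    rw [hq, hp, mul_smul_comm, mul_one, smul_mul_assoc, one_mul] at h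
    exact smul_left_injective ℂ (fun h0 => hmΩ (by rw [h0]; rfl)) h.symm
  obtain ⟨F, ⟨C, hC⟩, hFc, hFd, hFbot, hFtop⟩ := hKMS m hm (star m) (star_mem hm)
  have hstrip := eq_exp_mul_of_strip_boundary hC hFc hFd (s := s) (p := p) (q := q)
    (fun t => by simp [hFbot, hcov, ← ContinuousLinearMap.mul_def, hp, hΩ])
    (fun t => by simp [hFtop, hcov, ← ContinuousLinearMap.mul_def, hq, hΩ])
  rw [hpq] at hstrip
  have hexp : Real.exp s = 1 := by
    exact_mod_cast (mul_right_cancel₀ hq0 ((one_mul q).trans hstrip)).symm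
  exact Real.exp_eq_one_iff s |>.1 hexp

lemma mem_span_singleton_of_apply_eq_self (M : VonNeumannAlgebra H) {Ω : H} (hΩ : ‖Ω‖ = 1)
    (hcyc : Dense ((fun a : H →L[ℂ] H => a Ω) '' (M : Set (H →L[ℂ] H))))
    (hD0 : D 0 = LinearIsometryEquiv.refl ℂ H)
    (hDadd : ∀ s t : ℝ, D (s + t) = (D s).trans (D t)) (hDcont : ∀ x : H, Continuous fun t => D t x)
    (hDΩ : ∀ t, D t Ω = Ω)
    (hDM : ∀ t, conjAct (D t) '' (M : Set (H →L[ℂ] H)) = (M : Set (H →L[ℂ] H)))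
    (herg : ∀ a ∈ M, (∀ t : ℝ, conjAct (D t) a = a) → ∃ c : ℂ, a = c • (1 : H →L[ℂ] H))
    {y : H} (hy : ∀ t, D t y = y) : y ∈ ℂ ∙ Ω := by
  refine Submodule.mem_span_singleton.2 ⟨⟪Ω, y⟫, hcyc.eq_of_inner_left (𝕜 := ℂ) ?_⟩
  rintro _ ⟨x, hx, rfl⟩
  obtain ⟨m, hmM, hmcov, hmx⟩ := exists_mem_conjAct_eq_smul M hD0 hDadd hDcont hDM
    (χ := fun _ => 1) continuous_const (fun _ _ => (mul_one 1).symm) (fun _ => norm_one) hx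
  obtain ⟨c, hc⟩ := herg m hmM fun t => by rw [hmcov, one_smul]
  have hfixed : ∀ v, (∀ t, D t v = v) → ⟪v, x Ω⟫ = c * ⟪v, Ω⟫ := fun v hv => by
    rw [← hmx Ω v hDΩ fun t => by rw [hv, one_smul], hc]
    simp
  rw [inner_smul_left, inner_conj_symm, hfixed y hy, hfixed Ω hDΩ, inner_self_eq_norm_sq_to_K, hΩ]
  push_cast
  ring

lemma mem_span_singleton_of_apply_eq_smul (M : VonNeumannAlgebra H) {Ω : H} (hΩ : ‖Ω‖ = 1)
    (hcyc : Dense ((fun a : H →L[ℂ] H => a Ω) '' (M : Set (H →L[ℂ] H))))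
    (hD0 : D 0 = LinearIsometryEquiv.refl ℂ H)
    (hDadd : ∀ s t : ℝ, D (s + t) = (D s).trans (D t)) (hDcont : ∀ x : H, Continuous fun t => D t x)
    (hDΩ : ∀ t, D t Ω = Ω)
    (hDM : ∀ t, conjAct (D t) '' (M : Set (H →L[ℂ] H)) = (M : Set (H →L[ℂ] H)))
    (hKMS : IsKMS M Ω fun t => conjAct (D t))
    (herg : ∀ a ∈ M, (∀ t : ℝ, conjAct (D t) a = a) → ∃ c : ℂ, a = c • (1 : H →L[ℂ] H))
    {y : H} (hy : y ≠ 0) {χ : ℝ → ℂ} (hχ : ∀ t, D t y = χ t • y) : y ∈ ℂ ∙ Ω := by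
  obtain ⟨s, hs⟩ := exists_eq_exp_of_apply_eq_smul hD0 hDadd hDcont hy hχ
  obtain rfl : χ = fun t : ℝ => exp (I * s * t) := funext hs
  have hs0 : s = 0 := by
    obtain ⟨x, hx, hyx⟩ : ∃ x ∈ M, ⟪y, x Ω⟫ ≠ 0 := by
      by_contra! h
      exact hy (hcyc.eq_zero_of_inner_left (𝕜 := ℂ) (by rintro _ ⟨x, hx, rfl⟩; exact h x hx))
    obtain ⟨m, hmM, hmcov, hmx⟩ := exists_mem_conjAct_eq_smul M hD0 hDadd hDcont hDM
      (χ := fun t : ℝ => exp (I * s * t)) (by fun_prop)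
      (fun u v => by rw [← exp_add]; push_cast; ring_nf)
      (fun t => by rw [mul_assoc, ← ofReal_mul]; exact norm_exp_I_mul_ofReal _) hx
    refine eq_zero_of_conjAct_eq_exp_smul M hΩ hKMS herg hmM (fun h => hyx ?_) hmcov
    rw [← hmx Ω y hDΩ hχ, h, inner_zero_right]
  exact mem_span_singleton_of_apply_eq_self M hΩ hcyc hD0 hDadd hDcont hDΩ hDM herg
    fun t => by simp [hχ, hs0]

end ModularGroup

theorem modular_dynamics_ergodic_implies_weakly_mixing_general
    {H : Type*} [NormedAddCommGroup H] [InnerProductSpace ℂ H] [CompleteSpace H]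
    (M : VonNeumannAlgebra H) (Ω : H) (hΩ : ‖Ω‖ = 1)
    (hcyc : Dense ((fun a : H →L[ℂ] H => a Ω) '' (M : Set (H →L[ℂ] H))))
    (D : ℝ → (H ≃ₗᵢ[ℂ] H))
    (hD0 : D 0 = LinearIsometryEquiv.refl ℂ H)
    (hDadd : ∀ s t : ℝ, D (s + t) = (D s).trans (D t))
    (hDcont : ∀ x : H, Continuous fun t => D t x)
    (hDΩ : ∀ t, D t Ω = Ω)
    (hDM : ∀ t, conjAct (D t) '' (M : Set (H →L[ℂ] H)) = (M : Set (H →L[ℂ] H)))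
    (hKMS : IsKMS M Ω fun t => conjAct (D t))
    (herg : ∀ a ∈ M, (∀ t : ℝ, conjAct (D t) a = a) →
      ∃ c : ℂ, a = c • (1 : H →L[ℂ] H)) :
    (Submodule.span ℂ
        {y : H | y ≠ 0 ∧ ∃ χ : ℝ → ℂ, ∀ t, D t y = χ t • y}).topologicalClosure
      = ℂ ∙ Ω := by
  refine le_antisymm (Submodule.topologicalClosure_minimal _ (Submodule.span_le.2 ?_)
    (Submodule.closed_of_finiteDimensional _)) ?_
  · rintro y ⟨hy, χ, hχ⟩
    exact mem_span_singleton_of_apply_eq_smul M hΩ hcyc hD0 hDadd hDcont hDΩ hDM hKMS herg hy hχ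
  · refine ((Submodule.span_singleton_le_iff_mem _ _).2 (Submodule.subset_span ?_)).trans
      (Submodule.le_topologicalClosure _)
    exact ⟨fun h => by simp [h] at hΩ, fun _ => 1, fun t => by rw [hDΩ, one_smul]⟩

theorem modular_dynamics_ergodic_implies_weakly_mixing
    {H : Type*} [NormedAddCommGroup H] [InnerProductSpace ℂ H] [CompleteSpace H]
    (M : VonNeumannAlgebra H) (Ω : H) (hΩ : ‖Ω‖ = 1)
    (hcyc : Dense ((fun a : H →L[ℂ] H => a Ω) '' (M : Set (H →L[ℂ] H))))
    (hsep : ∀ a ∈ M, a Ω = 0 → a = 0)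
    (D : ℝ → (H ≃ₗᵢ[ℂ] H))
    (hD0 : D 0 = LinearIsometryEquiv.refl ℂ H)
    (hDadd : ∀ s t : ℝ, D (s + t) = (D s).trans (D t))
    (hDcont : ∀ x : H, Continuous fun t => D t x)
    (hDΩ : ∀ t, D t Ω = Ω)
    (hDM : ∀ t, conjAct (D t) '' (M : Set (H →L[ℂ] H)) = (M : Set (H →L[ℂ] H)))
    (hKMS : IsKMS M Ω fun t => conjAct (D t))
    (herg : ∀ a ∈ M, (∀ t : ℝ, conjAct (D t) a = a) →
      ∃ c : ℂ, a = c • (1 : H →L[ℂ] H)) :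
    (Submodule.span ℂ
        {y : H | y ≠ 0 ∧ ∃ χ : ℝ → ℂ, ∀ t, D t y = χ t • y}).topologicalClosure
      = ℂ ∙ Ω :=
  modular_dynamics_ergodic_implies_weakly_mixing_general M Ω hΩ hcyc D hD0 hDadd hDcont hDΩ hDM hKMS
    herg
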